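/- arXiv:2009.08177 — 2 statements merged into one kernel-verified Lean document; each statement's English description precedes it below -/
import Mathlib

section
/- Let G be a connected simple graph, {E_1, …, E_k} a c-partition of E(G), e = uv ∈ E_i, U = ℓ_i(u), V = ℓ_i(v), and E = UV the corresponding edge of G_i = G/E_i. Then M_u(e|G) = (⋃_{X ∈ N_U(E|G_i)} E(X)) ∪ (⋃_{F ∈ M_U(E|G_i)} F̂) and M_v(e|G) = (⋃_{X ∈ N_V(E|G_i)} E(X)) ∪ (⋃_{F ∈ M_V(E|G_i)} F̂); that is, the edges of G strictly closer to u than to v are exactly the edges lying inside components strictly closer to U, together with the edges of G corresponding to quotient edges strictly closer to U. -/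
open SimpleGraph

namespace SzegedCut

variable {V : Type*}

/-- `N_u(e|G)` for the edge `e = uv`: vertices strictly closer to `u` than to `v`. -/
def Nset (G : SimpleGraph V) (u v : V) : Set V := {x | G.dist u x < G.dist v x}

/-- `N_0(e|G)` for the edge `e = uv`: vertices equidistant from `u` and `v`. -/
def N0set (G : SimpleGraph V) (u v : V) : Set V := {x | G.dist u x = G.dist v x}

/-- Distance from a vertex to an edge: minimum over the endpoints of the edge. -/
noncomputable def eDist (G : SimpleGraph V) (u : V) : Sym2 V → ℕ :=
  Sym2.lift ⟨fun x y => min (G.dist u x) (G.dist u y), fun x y => min_comm _ _⟩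

/-- `M_u(e|G)` for the edge `e = uv`: edges strictly closer to `u` than to `v`. -/
def Mset (G : SimpleGraph V) (u v : V) : Set (Sym2 V) :=
  {f | f ∈ G.edgeSet ∧ eDist G u f < eDist G v f}

/-- `M_0(e|G)` for the edge `e = uv`: edges equidistant from `u` and `v`. -/
def M0set (G : SimpleGraph V) (u v : V) : Set (Sym2 V) :=
  {f | f ∈ G.edgeSet ∧ eDist G u f = eDist G v f}

/-- The Djoković–Winkler relation `Θ` on the edges of `G`. -/
def Theta (G : SimpleGraph V) (e₁ e₂ : Sym2 V) : Prop :=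
  e₁ ∈ G.edgeSet ∧ e₂ ∈ G.edgeSet ∧
    ∃ u₁ v₁ u₂ v₂, e₁ = s(u₁, v₁) ∧ e₂ = s(u₂, v₂) ∧
      G.dist u₁ u₂ + G.dist v₁ v₂ ≠ G.dist u₁ v₂ + G.dist u₂ v₁

/-- `Θ*`, the transitive closure of the Djoković–Winkler relation. -/
def ThetaStar (G : SimpleGraph V) : Sym2 V → Sym2 V → Prop :=
  Relation.TransGen (Theta G)

/-- A c-partition of `E(G)`: a partition of the edge set each of whose parts is a
union of `Θ*`-classes (equivalently, is closed under `Θ*`). -/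
def IsCPartition (G : SimpleGraph V) {k : ℕ} (P : Fin k → Set (Sym2 V)) : Prop :=
  (⋃ i, P i) = G.edgeSet ∧
  (∀ i j, i ≠ j → Disjoint (P i) (P j)) ∧
  (∀ i, ∀ e ∈ P i, ∀ f, ThetaStar G e f → f ∈ P i)

/-- The connected components of `G \ F`, i.e. the vertices of the quotient graph `G/F`. -/
abbrev Comp (G : SimpleGraph V) (F : Set (Sym2 V)) := (G.deleteEdges F).ConnectedComponent

/-- `ℓ(u)`: the connected component of `G \ F` containing `u`. -/
def proj (G : SimpleGraph V) (F : Set (Sym2 V)) (u : V) : Comp G F :=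
  (G.deleteEdges F).connectedComponentMk u

/-- The quotient graph `G/F`: vertices are the connected components of `G \ F`,
two components being adjacent iff some vertex of one is adjacent in `G` to a
vertex of the other. -/
def quotGraph (G : SimpleGraph V) (F : Set (Sym2 V)) : SimpleGraph (Comp G F) where
  Adj X Y := X ≠ Y ∧ ∃ x y, G.Adj x y ∧ proj G F x = X ∧ proj G F y = Y
  symm := by
    constructor
    rintro X Y ⟨hne, x, y, hadj, hx, hy⟩
    exact ⟨hne.symm, y, x, hadj.symm, hy, hx⟩
  loopless := by constructor; rintro X ⟨hne, -⟩; exact hne rfl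

/-- `Ê` for a quotient edge `E`: the edges of `G` joining the two components of `E`. -/
def hatE (G : SimpleGraph V) (F : Set (Sym2 V)) (E : Sym2 (Comp G F)) : Set (Sym2 V) :=
  {e | e ∈ G.edgeSet ∧ e.map (proj G F) = E}

/-- `E(X)` for a component `X` of `G \ F`: the edges of `G \ F` lying inside `X`. -/
def compEdges (G : SimpleGraph V) (F : Set (Sym2 V)) (X : Comp G F) : Set (Sym2 V) :=
  {f | f ∈ (G.deleteEdges F).edgeSet ∧ ∀ x ∈ f, x ∈ X.supp}

/-- Sum of a weight function over a set. -/
noncomputable def vsum {α : Type*} (s : Set α) (w : α → ℝ) : ℝ := ∑ᶠ x ∈ s, w x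

/-- `n_u(e|G_sw)` for `e = uv`. -/
noncomputable def nval (G : SimpleGraph V) (wv : V → ℝ) (u v : V) : ℝ :=
  vsum (Nset G u v) wv

/-- `n_0(e|G_sw)` for `e = uv`. -/
noncomputable def n0val (G : SimpleGraph V) (wv : V → ℝ) (u v : V) : ℝ :=
  vsum (N0set G u v) wv

/-- `m_u(e|G_sw)` for `e = uv`. -/
noncomputable def mval (G : SimpleGraph V) (sv : V → ℝ) (se : Sym2 V → ℝ) (u v : V) : ℝ :=
  vsum (Nset G u v) sv + vsum (Mset G u v) se

/-- `m_0(e|G_sw)` for `e = uv`. -/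
noncomputable def m0val (G : SimpleGraph V) (sv : V → ℝ) (se : Sym2 V → ℝ) (u v : V) : ℝ :=
  vsum (N0set G u v) sv + vsum (M0set G u v) se

lemma N0set_comm (G : SimpleGraph V) (u v : V) : N0set G u v = N0set G v u :=
  Set.ext fun _ => eq_comm

lemma M0set_comm (G : SimpleGraph V) (u v : V) : M0set G u v = M0set G v u :=
  Set.ext fun _ => and_congr_right fun _ => eq_comm

lemma n0val_comm (G : SimpleGraph V) (wv : V → ℝ) (u v : V) :
    n0val G wv u v = n0val G wv v u := by rw [n0val, n0val, N0set_comm]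

lemma m0val_comm (G : SimpleGraph V) (sv : V → ℝ) (se : Sym2 V → ℝ) (u v : V) :
    m0val G sv se u v = m0val G sv se v u := by
  rw [m0val, m0val, N0set_comm, M0set_comm]

/-- A regular function of six variables: symmetric in the first two and in the
next two coordinates. -/
def IsRegular (F : ℝ → ℝ → ℝ → ℝ → ℝ → ℝ → ℝ) : Prop :=
  ∀ a b c d x y, F a b c d x y = F b a d c x y

/-- `F(e|G_sw)` for a regular function `F`. -/
noncomputable def FEdge (G : SimpleGraph V) (wv sv : V → ℝ) (se : Sym2 V → ℝ)
    (F : ℝ → ℝ → ℝ → ℝ → ℝ → ℝ → ℝ) (hF : IsRegular F) : Sym2 V → ℝ :=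
  Sym2.lift ⟨fun u v =>
      F (nval G wv u v) (nval G wv v u) (mval G sv se u v) (mval G sv se v u)
        (n0val G wv u v) (m0val G sv se u v),
    fun u v => by dsimp only; rw [hF, n0val_comm, m0val_comm]⟩

/-- The general Szeged-like topological index `TI_F(G_sw)`. -/
noncomputable def TI (G : SimpleGraph V) (wv sv : V → ℝ) (we se : Sym2 V → ℝ)
    (F : ℝ → ℝ → ℝ → ℝ → ℝ → ℝ → ℝ) (hF : IsRegular F) : ℝ :=
  ∑ᶠ e ∈ G.edgeSet, we e * FEdge G wv sv se F hF e

/-- Vertex weight `w_v^i` of the strength-weighted quotient graph. -/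
noncomputable def qwv (G : SimpleGraph V) (F : Set (Sym2 V)) (wv : V → ℝ)
    (X : Comp G F) : ℝ :=
  vsum X.supp wv

/-- Vertex weight `s_v^i` of the strength-weighted quotient graph. -/
noncomputable def qsv (G : SimpleGraph V) (F : Set (Sym2 V)) (sv : V → ℝ)
    (se : Sym2 V → ℝ) (X : Comp G F) : ℝ :=
  vsum (compEdges G F X) se + vsum X.supp sv

/-- Edge weight `w_e^i` of the strength-weighted quotient graph. -/
noncomputable def qwe (G : SimpleGraph V) (F : Set (Sym2 V)) (we : Sym2 V → ℝ)
    (E : Sym2 (Comp G F)) : ℝ :=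
  vsum (hatE G F E) we

/-- Edge weight `s_e^i` of the strength-weighted quotient graph. -/
noncomputable def qse (G : SimpleGraph V) (F : Set (Sym2 V)) (se : Sym2 V → ℝ)
    (E : Sym2 (Comp G F)) : ℝ :=
  vsum (hatE G F E) se


section Core

variable (G : SimpleGraph V) (S : Set (Sym2 V))

noncomputable def dz (a b : V) : ℤ := (G.dist a b : ℤ)

noncomputable def E4 (a b c d : V) : ℤ := dz G a d + dz G b c - dz G a c - dz G b d

open Classical in
noncomputable def crossList : ∀ {x y : V}, G.Walk x y → List (V × V)
  | _, _, Walk.nil => []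
  | _, _, Walk.cons (u := x) (v := c) _h p =>
      (if s(x, c) ∈ S then [(x, c)] else []) ++ crossList p

variable {G S}

lemma dz_comm (a b : V) : dz G a b = dz G b a := by simp [dz, G.dist_comm]

lemma dz_self (a : V) : dz G a a = 0 := by simp [dz]

lemma dz_adj {a b : V} (h : G.Adj a b) : dz G a b = 1 := by
  simp [dz, dist_eq_one_iff_adj.2 h]

lemma crossList_nil {x : V} : crossList G S (Walk.nil : G.Walk x x) = [] := rfl

open Classical in
lemma crossList_cons {x c y : V} (h : G.Adj x c) (p : G.Walk c y) :
    crossList G S (Walk.cons h p) =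
      (if s(x, c) ∈ S then [(x, c)] else []) ++ crossList G S p := rfl

lemma mem_crossList {x y : V} {w : G.Walk x y} {pr : V × V}
    (hpr : pr ∈ crossList G S w) :
    G.Adj pr.1 pr.2 ∧ s(pr.1, pr.2) ∈ S ∧
      ∃ d ∈ w.darts, d.fst = pr.1 ∧ d.snd = pr.2 := by
  induction w with
  | nil => simp [crossList_nil] at hpr
  | cons h p ih =>
    classical
    rw [crossList_cons] at hpr
    rcases List.mem_append.1 hpr with h1 | h2
    · split_ifs at h1 with hs
      · simp only [List.mem_singleton] at h1; subst h1
        exact ⟨h, hs, ⟨_, h⟩, by simp [Walk.darts_cons], rfl, rfl⟩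
      · simp at h1
    · obtain ⟨ha, hs, d, hd, h1, h2⟩ := ih h2
      exact ⟨ha, hs, d, by simp [Walk.darts_cons, hd], h1, h2⟩

def SClosed (G : SimpleGraph V) (S : Set (Sym2 V)) : Prop :=
  S ⊆ G.edgeSet ∧ ∀ f ∈ S, ∀ h ∈ G.edgeSet, h ∉ S → ¬ Theta G f h

lemma E4_symm (a b c d : V) : E4 G a b c d = E4 G c d a b := by
  simp only [E4]
  rw [dz_comm a d, dz_comm b c, dz_comm a c, dz_comm b d]; ring

lemma E4_eq_zero (hS : SClosed G S) {a b p q : V} (hab : s(a, b) ∈ S)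
    (hpq : G.Adj p q) (hpqS : s(p, q) ∉ S) : E4 G a b p q = 0 := by
  have hnt := hS.2 _ hab _ (G.mem_edgeSet.2 hpq) hpqS
  have key : G.dist a p + G.dist b q = G.dist a q + G.dist p b := by
    by_contra hne
    exact hnt ⟨hS.1 hab, G.mem_edgeSet.2 hpq, a, b, p, q, rfl, rfl, hne⟩
  simp only [E4, dz]
  have : G.dist p b = G.dist b p := G.dist_comm
  omega

lemma tel (F : V → ℤ) (hF : ∀ p q : V, G.Adj p q → s(p, q) ∉ S → F p = F q) :
    ∀ {y z : V} (w : G.Walk y z),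
      ((crossList G S w).map (fun pr => F pr.2 - F pr.1)).sum = F z - F y := by
  intro y z w
  induction w with
  | nil => simp [crossList_nil]
  | cons h p ih =>
    classical
    rw [crossList_cons]
    split_ifs with hs
    · simp only [List.map_append, List.sum_append, List.map_cons, List.map_nil,
        List.sum_cons, List.sum_nil]
      rw [ih]; ring
    · simp only [List.nil_append]
      rw [ih, hF _ _ h hs]

end Core

section Lists

lemma sum_map_add {α : Type*} (l : List α) (f g : α → ℤ) :
    (l.map (fun a => f a + g a)).sum = (l.map f).sum + (l.map g).sum := by
  induction l with
  | nil => simp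
  | cons a l ih => simp [ih]; ring

lemma sum_swap {α β : Type*} (l₁ : List α) (l₂ : List β) (f : α → β → ℤ) :
    (l₁.map (fun a => (l₂.map (f a)).sum)).sum
      = (l₂.map (fun b => (l₁.map (fun a => f a b)).sum)).sum := by
  induction l₁ with
  | nil => simp
  | cons a l ih =>
    simp only [List.map_cons, List.sum_cons, ih, ← sum_map_add]

lemma sum_const_two {α : Type*} (l : List α) (f : α → ℤ) (h : ∀ a ∈ l, f a = 2) :
    (l.map f).sum = 2 * l.length := by
  induction l with
  | nil => simp
  | cons a l ih =>
    simp only [List.map_cons, List.sum_cons, List.length_cons]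
    rw [h a (List.mem_cons_self (a := a) (l := l)), ih (fun a ha => h a (List.mem_cons_of_mem _ ha))]
    push_cast; ring

lemma sum_le_two {α : Type*} (l : List α) (f : α → ℤ) (h : ∀ a ∈ l, f a ≤ 2) :
    (l.map f).sum ≤ 2 * l.length := by
  induction l with
  | nil => simp
  | cons a l ih =>
    simp only [List.map_cons, List.sum_cons, List.length_cons]
    have h1 := h a (List.mem_cons_self (a := a) (l := l))
    have h2 := ih (fun a ha => h a (List.mem_cons_of_mem _ ha))
    push_cast; push_cast at h2; linarith

end Lists

section SP
variable {G : SimpleGraph V}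

lemma shortest_darts (hconn : G.Connected) :
    ∀ {u x : V} (w : G.Walk u x), w.length = G.dist u x →
      ∀ d ∈ w.darts, (G.dist u d.fst + 1 = G.dist u d.snd) ∧
        (G.dist d.snd x + 1 = G.dist d.fst x) ∧
        (G.dist u d.fst + G.dist d.fst x = G.dist u x) ∧
        (G.dist u d.snd + G.dist d.snd x = G.dist u x) := by
  intro u x w
  induction w with
  | nil => intro _ d hd; simp [Walk.darts_nil] at hd
  | @cons u c x h p ih =>
    intro hlen d hd
    have hux : G.dist u x = p.length + 1 := by
      rw [← hlen]; simp [Walk.length_cons]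
    have hcx_le : G.dist c x ≤ p.length := G.dist_le p
    have huc_le : G.dist u c ≤ 1 := by
      have := G.dist_le (Walk.cons h Walk.nil); simpa using this
    have htri : G.dist u x ≤ G.dist u c + G.dist c x := hconn.dist_triangle
    have hcx : G.dist c x = p.length := by omega
    have huc : G.dist u c = 1 := by
      by_contra hne
      have h0 : G.dist u c = 0 := by omega
      have heq : u = c := hconn.dist_eq_zero_iff.1 h0
      subst heq; omega
    rw [Walk.darts_cons, List.mem_cons] at hd
    rcases hd with rfl | hd
    · refine ⟨?_, ?_, ?_, ?_⟩
      · show G.dist u u + 1 = G.dist u c; simp [G.dist_self]; omega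
      · show G.dist c x + 1 = G.dist u x; omega
      · show G.dist u u + G.dist u x = G.dist u x; simp [G.dist_self]
      · show G.dist u c + G.dist c x = G.dist u x; omega
    · obtain ⟨ih1, ih2, ih3, ih4⟩ := ih hcx.symm d hd
      set a := d.fst; set b := d.snd
      have t1 : G.dist u a ≤ G.dist u c + G.dist c a := hconn.dist_triangle
      have t2 : G.dist u x ≤ G.dist u a + G.dist a x := hconn.dist_triangle
      have t3 : G.dist u b ≤ G.dist u c + G.dist c b := hconn.dist_triangle
      have t4 : G.dist u x ≤ G.dist u b + G.dist b x := hconn.dist_triangle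
      refine ⟨by omega, by omega, by omega, by omega⟩

end SP

section Main
variable {G : SimpleGraph V} {S : Set (Sym2 V)}

/-- Route 1: the double sum equals `2 * (number of S-edges of a shortest path P)`,
for any walk `W` with the same endpoints. -/
lemma TOT_route1 (hconn : G.Connected) (hS : SClosed G S) {u x : V}
    (P : G.Walk u x) (hP : P.length = G.dist u x) (W : G.Walk u x) :
    ((crossList G S P).map
        (fun pr => ((crossList G S W).map (fun qr => E4 G pr.1 pr.2 qr.1 qr.2)).sum)).sum
      = 2 * (crossList G S P).length := by
  apply sum_const_two
  intro pr hpr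
  obtain ⟨hadj, hsS, d, hd, hd1, hd2⟩ := mem_crossList hpr
  set a := pr.1; set b := pr.2
  have hmapeq : (fun qr : V × V => E4 G a b qr.1 qr.2)
      = fun qr : V × V => (fun w => dz G a w - dz G b w) qr.2 - (fun w => dz G a w - dz G b w) qr.1 := by
    funext qr; simp only [E4]; ring
  have hF : ∀ p q : V, G.Adj p q → s(p, q) ∉ S →
      (fun w => dz G a w - dz G b w) p = (fun w => dz G a w - dz G b w) q := by
    intro p q hpq hpqS
    have := E4_eq_zero hS hsS hpq hpqS
    simp only [E4] at this ⊢
    linarith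
  rw [hmapeq, tel _ hF W]
  obtain ⟨sp1, sp2, _, _⟩ := shortest_darts hconn P hP d hd
  rw [hd1, hd2] at sp1 sp2
  simp only [dz]
  have c1 : G.dist a u = G.dist u a := G.dist_comm
  have c2 : G.dist b u = G.dist u b := G.dist_comm
  omega

lemma inner_eval (hS : SClosed G S) {u x : V} (P : G.Walk u x)
    {c d : V} (hcd : s(c, d) ∈ S) :
    ((crossList G S P).map (fun pr => E4 G pr.1 pr.2 c d)).sum
      = (dz G x c - dz G x d) - (dz G u c - dz G u d) := by
  have hmapeq : (fun pr : V × V => E4 G pr.1 pr.2 c d)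
      = fun pr : V × V => (fun w => dz G w c - dz G w d) pr.2
          - (fun w => dz G w c - dz G w d) pr.1 := by
    funext pr; simp only [E4]; ring
  have hF : ∀ p q : V, G.Adj p q → s(p, q) ∉ S →
      (fun w => dz G w c - dz G w d) p = (fun w => dz G w c - dz G w d) q := by
    intro p q hpq hpqS
    have h0 := E4_eq_zero hS hcd hpq hpqS
    rw [E4_symm] at h0
    simp only [E4] at h0 ⊢
    linarith
  rw [hmapeq, tel _ hF P]

/-- Lemma A: a shortest path crosses `S` at most as often as any walk with the
same endpoints. -/
lemma key_le (hconn : G.Connected) (hS : SClosed G S) {u x : V}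
    (P : G.Walk u x) (hP : P.length = G.dist u x) (W : G.Walk u x) :
    (crossList G S P).length ≤ (crossList G S W).length := by
  have h1 := TOT_route1 hconn hS P hP W
  rw [sum_swap] at h1
  have h2 : ((crossList G S W).map
      (fun qr => ((crossList G S P).map (fun pr => E4 G pr.1 pr.2 qr.1 qr.2)).sum)).sum
      ≤ 2 * (crossList G S W).length := by
    apply sum_le_two
    intro qr hqr
    obtain ⟨hadj, hsS, -⟩ := mem_crossList hqr
    rw [inner_eval hS P hsS]
    have e1 : dz G qr.1 qr.2 = 1 := dz_adj hadj
    have t1 : G.dist x qr.1 ≤ G.dist x qr.2 + G.dist qr.2 qr.1 := hconn.dist_triangle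
    have t2 : G.dist u qr.2 ≤ G.dist u qr.1 + G.dist qr.1 qr.2 := hconn.dist_triangle
    have c1 : G.dist qr.2 qr.1 = G.dist qr.1 qr.2 := G.dist_comm
    simp only [dz] at e1 ⊢
    omega
  omega

/-- Lemma B: the exact crossing-count identity for an `S`-edge `uv`. -/
lemma key_exact (hconn : G.Connected) (hS : SClosed G S) {u v x : V}
    (huv : G.Adj u v) (hsuv : s(u, v) ∈ S)
    (P : G.Walk u x) (hP : P.length = G.dist u x)
    (Q : G.Walk v x) (hQ : Q.length = G.dist v x) :
    ((crossList G S P).length : ℤ)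
      = (crossList G S Q).length + (dz G u x - dz G v x) := by
  classical
  set W : G.Walk u x := Walk.cons huv Q with hW
  have h1 := TOT_route1 hconn hS P hP W
  rw [sum_swap] at h1
  have hCLW : crossList G S W = (u, v) :: crossList G S Q := by
    rw [hW, crossList_cons, if_pos hsuv]; rfl
  rw [hCLW] at h1
  simp only [List.map_cons, List.sum_cons] at h1
  -- head term
  have hhead : ((crossList G S P).map (fun pr => E4 G pr.1 pr.2 u v)).sum
      = (dz G u x - dz G v x) + 1 := by
    rw [inner_eval hS P hsuv]
    rw [dz_comm x u, dz_comm x v, dz_self, dz_adj huv]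
    ring
  -- tail terms
  have htail : ((crossList G S Q).map
      (fun qr => ((crossList G S P).map (fun pr => E4 G pr.1 pr.2 qr.1 qr.2)).sum)).sum
      = 2 * (crossList G S Q).length + (dz G u x - dz G v x) - 1 := by
    have hpt : ∀ qr ∈ crossList G S Q,
        ((crossList G S P).map (fun pr => E4 G pr.1 pr.2 qr.1 qr.2)).sum
          = (fun qr : V × V => 2 + ((fun w => dz G u w - dz G v w) qr.2
              - (fun w => dz G u w - dz G v w) qr.1)) qr := by
      intro qr hqr
      obtain ⟨hadj, hsS, dd, hdd, hdd1, hdd2⟩ := mem_crossList hqr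
      rw [inner_eval hS P hsS]
      obtain ⟨sp1, sp2, -, -⟩ := shortest_darts hconn Q hQ dd hdd
      rw [hdd1, hdd2] at sp1 sp2
      have c1 : G.dist x qr.1 = G.dist qr.1 x := G.dist_comm
      have c2 : G.dist x qr.2 = G.dist qr.2 x := G.dist_comm
      simp only [dz]
      push_cast
      omega
    rw [List.map_congr_left hpt, sum_map_add]
    have hFD : ∀ p q : V, G.Adj p q → s(p, q) ∉ S →
        (fun w => dz G u w - dz G v w) p = (fun w => dz G u w - dz G v w) q := by
      intro p q hpq hpqS
      have h0 := E4_eq_zero hS hsuv hpq hpqS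
      simp only [E4] at h0 ⊢
      linarith
    rw [tel _ hFD Q, sum_const_two _ _ (fun a _ => rfl)]
    rw [dz_adj huv, dz_self]
    ring
  rw [hhead, htail] at h1
  omega

end Main

section Quot
variable {G : SimpleGraph V} {S : Set (Sym2 V)}

lemma proj_eq_of_adj_notS {p q : V} (h : G.Adj p q) (hs : s(p, q) ∉ S) :
    proj G S p = proj G S q :=
  ConnectedComponent.sound (SimpleGraph.Adj.reachable ((SimpleGraph.deleteEdges_adj).2 ⟨h, hs⟩))

lemma reach_proj {x y : V} (w : G.Walk x y) :
    (quotGraph G S).Reachable (proj G S x) (proj G S y) := by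
  induction w with
  | nil => exact Reachable.refl _
  | @cons x c y h p ih =>
    by_cases hxc : proj G S x = proj G S c
    · rwa [hxc]
    · have hq : (quotGraph G S).Adj (proj G S x) (proj G S c) := ⟨hxc, x, c, h, rfl, rfl⟩
      exact hq.reachable.trans ih

lemma quot_connected (hconn : G.Connected) : (quotGraph G S).Connected := by
  have hne : Nonempty V := hconn.nonempty
  rw [connected_iff]
  refine ⟨?_, ⟨proj G S (Classical.arbitrary V)⟩⟩
  intro X Y
  induction X using SimpleGraph.ConnectedComponent.ind with | _ x =>
  induction Y using SimpleGraph.ConnectedComponent.ind with | _ y =>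
  exact reach_proj (hconn.exists_walk_length_eq_dist x y).choose

/-- projection: quotient distance is at most the crossing number of any walk -/
lemma qdist_le_cross (hconn : G.Connected) :
    ∀ {x y : V} (w : G.Walk x y),
      (quotGraph G S).dist (proj G S x) (proj G S y) ≤ (crossList G S w).length := by
  intro x y w
  induction w with
  | nil => simp [crossList_nil, SimpleGraph.dist_self]
  | @cons x c y h p ih =>
    classical
    rw [crossList_cons]
    by_cases hs : s(x, c) ∈ S
    · rw [if_pos hs]
      by_cases hxc : proj G S x = proj G S c
      · rw [hxc]; simp only [List.length_append, List.length_cons, List.length_nil]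
        omega
      · have hadj : (quotGraph G S).Adj (proj G S x) (proj G S c) := ⟨hxc, x, c, h, rfl, rfl⟩
        have htri := (quot_connected (S := S) hconn).dist_triangle
          (u := proj G S x) (v := proj G S c) (w := proj G S y)
        have h1 : (quotGraph G S).dist (proj G S x) (proj G S c) ≤ 1 := by
          have := (quotGraph G S).dist_le (Walk.cons hadj Walk.nil)
          simpa using this
        simp only [List.length_append, List.length_cons, List.length_nil]
        omega
    · rw [if_neg hs, List.nil_append, proj_eq_of_adj_notS h hs]
      exact ih

/-- a walk inside `G.deleteEdges S`, viewed in `G`, has no crossings -/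
noncomputable def liftDel : ∀ {x y : V}, (G.deleteEdges S).Walk x y → G.Walk x y
  | _, _, Walk.nil => Walk.nil
  | _, _, Walk.cons h p => Walk.cons ((SimpleGraph.deleteEdges_adj).1 h).1 (liftDel p)

lemma crossList_liftDel {x y : V} (w : (G.deleteEdges S).Walk x y) :
    crossList G S (liftDel w) = [] := by
  induction w with
  | nil => rfl
  | cons h p ih =>
    show crossList G S (Walk.cons _ _) = []
    rw [crossList_cons, if_neg ((SimpleGraph.deleteEdges_adj).1 h).2, ih, List.append_nil]

lemma crossList_append {x y z : V} (w₁ : G.Walk x y) (w₂ : G.Walk y z) :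
    crossList G S (w₁.append w₂) = crossList G S w₁ ++ crossList G S w₂ := by
  induction w₁ with
  | nil => simp [crossList_nil]
  | cons h p ih =>
    show crossList G S (Walk.cons _ _) = _
    rw [crossList_cons, ih, crossList_cons, List.append_assoc]

lemma exists_zero_walk {x y : V} (h : proj G S x = proj G S y) :
    ∃ w : G.Walk x y, crossList G S w = [] := by
  obtain ⟨w⟩ := SimpleGraph.ConnectedComponent.exact h
  exact ⟨liftDel w, crossList_liftDel w⟩

/-- lifting: a quotient walk lifts to a walk with at most as many crossings -/
lemma lift_walk : ∀ {X Y : Comp G S} (Wq : (quotGraph G S).Walk X Y) (x y : V),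
    proj G S x = X → proj G S y = Y →
      ∃ w : G.Walk x y, (crossList G S w).length ≤ Wq.length := by
  intro X Y Wq
  induction Wq with
  | nil =>
    intro x y hx hy
    obtain ⟨w, hw⟩ := exists_zero_walk (S := S) (hx.trans hy.symm)
    exact ⟨w, by simp [hw]⟩
  | @cons X Z Y hadj p ih =>
    intro x y hx hy
    obtain ⟨-, a, b, hab, ha, hb⟩ := id hadj
    obtain ⟨w₁, hw₁⟩ := exists_zero_walk (S := S) (hx.trans ha.symm)
    obtain ⟨w₂, hw₂⟩ := ih b y hb hy
    refine ⟨w₁.append (Walk.cons hab w₂), ?_⟩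
    classical
    rw [crossList_append, hw₁, List.nil_append, crossList_cons]
    simp only [Walk.length_cons, List.length_append]
    split_ifs <;> simp <;> omega

/-- quotient distance equals the crossing number of a shortest path -/
lemma qdist_eq_cross (hconn : G.Connected) (hS : SClosed G S) {x y : V}
    (P : G.Walk x y) (hP : P.length = G.dist x y) :
    (quotGraph G S).dist (proj G S x) (proj G S y) = (crossList G S P).length := by
  refine le_antisymm (qdist_le_cross hconn P) ?_
  obtain ⟨Wq, hWq⟩ := Reachable.exists_walk_length_eq_dist
    ((quot_connected (S := S) hconn).preconnected (proj G S x) (proj G S y))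
  obtain ⟨w, hw⟩ := lift_walk Wq x y rfl rfl
  calc (crossList G S P).length ≤ (crossList G S w).length := key_le hconn hS P hP w
    _ ≤ Wq.length := hw
    _ = _ := hWq

/-- **Main distance lemma**: for an `S`-edge `uv` and every vertex `x`:
`d_i(U,X) - d_i(V,X) = d(u,x) - d(v,x)`. -/
lemma qdist_sub (hconn : G.Connected) (hS : SClosed G S) {u v : V}
    (huv : G.Adj u v) (hsuv : s(u, v) ∈ S) (x : V) :
    ((quotGraph G S).dist (proj G S u) (proj G S x) : ℤ)
        - (quotGraph G S).dist (proj G S v) (proj G S x)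
      = dz G u x - dz G v x := by
  obtain ⟨P, hP⟩ := hconn.exists_walk_length_eq_dist u x
  obtain ⟨Q, hQ⟩ := hconn.exists_walk_length_eq_dist v x
  rw [qdist_eq_cross hconn hS P hP, qdist_eq_cross hconn hS Q hQ]
  have := key_exact hconn hS huv hsuv P hP Q hQ
  omega

end Quot

section Assembly

variable {G : SimpleGraph V} {S : Set (Sym2 V)}

lemma eDist_mk (G : SimpleGraph V) (u p q : V) :
    eDist G u s(p, q) = min (G.dist u p) (G.dist u q) := by
  simp [eDist]

lemma notS_of_proj_ne {p q : V} (hf : G.Adj p q) (hne : proj G S p ≠ proj G S q) :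
    s(p, q) ∈ S := by
  by_contra hs
  exact hne (proj_eq_of_adj_notS hf hs)

lemma proj_ne_of_S (hconn : G.Connected) (hS : SClosed G S) {p q : V}
    (hf : G.Adj p q) (hs : s(p, q) ∈ S) : proj G S p ≠ proj G S q := by
  intro hEq
  have h4 := qdist_sub hconn hS hf hs p
  rw [hEq] at h4
  have hd : G.dist q p = 1 := dist_eq_one_iff_adj.2 hf.symm
  have hpp : G.dist p p = 0 := G.dist_self
  simp only [dz, sub_self] at h4
  omega

lemma main_aux (hconn : G.Connected) (hS : SClosed G S)
    {u v : V} (huv : G.Adj u v) (hsuv : s(u, v) ∈ S) :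
    Mset G u v =
      (⋃ X ∈ Nset (quotGraph G S) (proj G S u) (proj G S v), compEdges G S X) ∪
      (⋃ E ∈ Mset (quotGraph G S) (proj G S u) (proj G S v), hatE G S E) := by
  ext f
  induction f using Sym2.ind with | _ p q =>
  simp only [Set.mem_union, Set.mem_iUnion, exists_prop]
  constructor
  · rintro ⟨hfe, hlt⟩
    have hf : G.Adj p q := (G.mem_edgeSet).1 hfe
    rw [eDist_mk, eDist_mk] at hlt
    have h1 := qdist_sub hconn hS huv hsuv p
    have h2 := qdist_sub hconn hS huv hsuv q
    simp only [dz] at h1 h2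
    by_cases hs : s(p, q) ∈ S
    · -- crossing edge: goes to a hat set
      have hne := proj_ne_of_S hconn hS hf hs
      have hadjq : (quotGraph G S).Adj (proj G S p) (proj G S q) := ⟨hne, p, q, hf, rfl, rfl⟩
      have h3 := qdist_sub hconn hS hf hs v
      simp only [dz] at h3
      refine Or.inr ⟨s(proj G S p, proj G S q), ⟨(quotGraph G S).mem_edgeSet.2 hadjq, ?_⟩,
        hfe, by rw [Sym2.map_pair_eq]⟩
      rw [eDist_mk, eDist_mk]
      have c2 : G.dist p v = G.dist v p := G.dist_comm
      have c3 : G.dist q v = G.dist v q := G.dist_comm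
      have c4 : (quotGraph G S).dist (proj G S p) (proj G S v)
          = (quotGraph G S).dist (proj G S v) (proj G S p) := SimpleGraph.dist_comm
      have c5 : (quotGraph G S).dist (proj G S q) (proj G S v)
          = (quotGraph G S).dist (proj G S v) (proj G S q) := SimpleGraph.dist_comm
      omega
    · -- internal edge: goes to a component set
      have hEq : proj G S p = proj G S q := proj_eq_of_adj_notS hf hs
      refine Or.inl ⟨proj G S p, ?_, (G.deleteEdges S).mem_edgeSet.2
        (SimpleGraph.deleteEdges_adj.2 ⟨hf, hs⟩), ?_⟩
      · show (quotGraph G S).dist _ _ < (quotGraph G S).dist _ _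
        rw [← hEq] at h2
        omega
      · intro z hz
        rw [Sym2.mem_iff] at hz
        rcases hz with rfl | rfl
        · exact rfl
        · exact hEq.symm
  · rintro (⟨X, hX, hcomp, hsupp⟩ | ⟨E, ⟨hEedge, hElt⟩, hfe, hmap⟩)
    · have hdel := (G.deleteEdges S).mem_edgeSet.1 hcomp
      rw [SimpleGraph.deleteEdges_adj] at hdel
      obtain ⟨hf, hs⟩ := hdel
      have hp : proj G S p = X := hsupp p (Sym2.mem_mk_left p q)
      have hq : proj G S q = X := hsupp q (Sym2.mem_mk_right p q)
      have hXlt : (quotGraph G S).dist (proj G S u) X < (quotGraph G S).dist (proj G S v) X := hX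
      refine ⟨G.mem_edgeSet.2 hf, ?_⟩
      rw [eDist_mk, eDist_mk]
      have h1 := qdist_sub hconn hS huv hsuv p
      have h2 := qdist_sub hconn hS huv hsuv q
      rw [hp] at h1
      rw [hq] at h2
      simp only [dz] at h1 h2
      omega
    · have hf : G.Adj p q := G.mem_edgeSet.1 hfe
      rw [Sym2.map_pair_eq] at hmap
      have hne : proj G S p ≠ proj G S q := by
        intro hEq
        rw [← hmap] at hEedge
        exact (quotGraph G S).not_isDiag_of_mem_edgeSet hEedge (by rw [hEq]; exact Sym2.mk_isDiag_iff.2 rfl)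
      have hs : s(p, q) ∈ S := notS_of_proj_ne hf hne
      have h1 := qdist_sub hconn hS huv hsuv p
      have h2 := qdist_sub hconn hS huv hsuv q
      have h3 := qdist_sub hconn hS hf hs v
      simp only [dz] at h1 h2 h3
      rw [← hmap] at hElt
      rw [eDist_mk, eDist_mk] at hElt
      refine ⟨hfe, ?_⟩
      rw [eDist_mk, eDist_mk]
      have c2 : G.dist p v = G.dist v p := G.dist_comm
      have c3 : G.dist q v = G.dist v q := G.dist_comm
      have c4 : (quotGraph G S).dist (proj G S p) (proj G S v)
          = (quotGraph G S).dist (proj G S v) (proj G S p) := SimpleGraph.dist_comm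
      have c5 : (quotGraph G S).dist (proj G S q) (proj G S v)
          = (quotGraph G S).dist (proj G S v) (proj G S q) := SimpleGraph.dist_comm
      omega

end Assembly


/-- With `e = uv ∈ E_i`, `U = ℓ_i(u)`, `V = ℓ_i(v)` and `E = UV` the
corresponding edge of `G_i = G/E_i`:
`M_u(e|G) = (⋃_{X ∈ N_U(E|G_i)} E(X)) ∪ (⋃_{F ∈ M_U(E|G_i)} F̂)`, and symmetrically
for `v`. -/
theorem Mset_eq_iUnion {V : Type*} [Finite V] (G : SimpleGraph V) (hG : G.Connected)
    {k : ℕ} (P : Fin k → Set (Sym2 V)) (hP : IsCPartition G P)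
    (i : Fin k) (u v : V) (he : s(u, v) ∈ P i) :
    Mset G u v =
      (⋃ X ∈ Nset (quotGraph G (P i)) (proj G (P i) u) (proj G (P i) v),
          compEdges G (P i) X) ∪
        (⋃ E ∈ Mset (quotGraph G (P i)) (proj G (P i) u) (proj G (P i) v),
          hatE G (P i) E) ∧
    Mset G v u =
      (⋃ X ∈ Nset (quotGraph G (P i)) (proj G (P i) v) (proj G (P i) u),
          compEdges G (P i) X) ∪
        (⋃ E ∈ Mset (quotGraph G (P i)) (proj G (P i) v) (proj G (P i) u),
          hatE G (P i) E) := by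
  classical
  have hsub : P i ⊆ G.edgeSet := hP.1 ▸ Set.subset_iUnion P i
  have hS : SClosed G (P i) := by
    refine ⟨hsub, ?_⟩
    intro f hf h hhe hhS hTheta
    exact hhS (hP.2.2 i f hf h (Relation.TransGen.single hTheta))
  have huv : G.Adj u v := G.mem_edgeSet.1 (hsub he)
  have hvu : s(v, u) ∈ P i := by rwa [Sym2.eq_swap]
  exact ⟨main_aux hG hS huv he, main_aux hG hS huv.symm hvu⟩


end SzegedCut
end

section
/- Let G_sw be a connected strength-weighted graph, {E_1, …, E_k} a c-partition of E(G), e = uv ∈ E_i, U = ℓ_i(u), V = ℓ_i(v), and E = UV the corresponding edge of the strength-weighted quotient graph G_i = G_sw/E_i. Then m_u(e|G_sw) = m_U(E|G_i) and m_v(e|G_sw) = m_V(E|G_i). -/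
open SimpleGraph

namespace SzegedCut

variable {V : Type*}

section Machinery

variable {V : Type*} {G : SimpleGraph V} {F : Set (Sym2 V)}

open scoped Classical

/-- Θ-closedness of `F`, repackaged: across edges not in `F`, the signed distance
difference to the two endpoints of any `F`-edge is constant. -/
def GoodF (G : SimpleGraph V) (F : Set (Sym2 V)) : Prop :=
  F ⊆ G.edgeSet ∧
  ∀ ⦃a b c d : V⦄, G.Adj a b → s(a, b) ∈ F → G.Adj c d → s(c, d) ∉ F →
    (G.dist a c : ℤ) - G.dist b c = (G.dist a d : ℤ) - G.dist b d

lemma GoodF.compl (h : GoodF G F) : GoodF G (G.edgeSet \ F) := by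
  refine ⟨Set.diff_subset, ?_⟩
  intro a b c d hab habm hcd hcdm
  have hcdF : s(c, d) ∈ F := by
    by_contra hc
    exact hcdm ⟨(G.mem_edgeSet).mpr hcd, hc⟩
  have h2 := h.2 hcd hcdF hab habm.2
  have e1 : G.dist a c = G.dist c a := SimpleGraph.dist_comm
  have e2 : G.dist b c = G.dist c b := SimpleGraph.dist_comm
  have e3 : G.dist a d = G.dist d a := SimpleGraph.dist_comm
  have e4 : G.dist b d = G.dist d b := SimpleGraph.dist_comm
  omega

lemma GoodF.sig_eq_of_reachable (h : GoodF G F) {a b : V} (hab : G.Adj a b)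
    (hm : s(a, b) ∈ F) {c d : V} (hr : (G.deleteEdges F).Reachable c d) :
    (G.dist a c : ℤ) - G.dist b c = (G.dist a d : ℤ) - G.dist b d := by
  obtain ⟨w⟩ := hr
  induction w with
  | nil => rfl
  | cons h' p ih =>
      rw [SimpleGraph.deleteEdges_adj] at h'
      exact (h.2 hab hm h'.1 h'.2).trans ih

lemma GoodF.proj_ne (h : GoodF G F) {c d : V} (hcd : G.Adj c d) (hm : s(c, d) ∈ F) :
    proj G F c ≠ proj G F d := by
  intro heq
  have hr : (G.deleteEdges F).Reachable c d := SimpleGraph.ConnectedComponent.exact heq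
  have h2 := h.sig_eq_of_reachable hcd hm hr
  have h3 : G.dist c c = 0 := G.dist_self
  have h4 : G.dist d d = 0 := G.dist_self
  have h5 : G.dist c d = 1 := SimpleGraph.dist_eq_one_iff_adj.mpr hcd
  have h6 : G.dist d c = 1 := SimpleGraph.dist_eq_one_iff_adj.mpr hcd.symm
  omega

lemma geodesic_dart_dists (hG : G.Connected) :
    ∀ {x y : V} (P : G.Walk x y), P.length = G.dist x y →
      ∀ D ∈ P.darts, G.dist x D.fst + G.dist D.fst y = G.dist x y ∧
        G.dist D.fst y = G.dist D.snd y + 1 := by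
  intro x y P
  induction P with
  | nil => intro _ D hD; simp at hD
  | @cons x w y h Q ih =>
      intro hlen D hD
      have hxw : G.dist x w = 1 := SimpleGraph.dist_eq_one_iff_adj.mpr h
      have h1 : G.dist w y ≤ Q.length := SimpleGraph.dist_le Q
      have h2 : G.dist x y ≤ G.dist x w + G.dist w y := hG.dist_triangle
      have hlen' : Q.length + 1 = G.dist x y := by
        simpa [SimpleGraph.Walk.length_cons] using hlen
      have hQ : G.dist w y = Q.length := by omega
      have hxy : G.dist x y = G.dist w y + 1 := by omega
      rw [SimpleGraph.Walk.darts_cons, List.mem_cons] at hD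
      rcases hD with rfl | hD
      · refine ⟨by simp [SimpleGraph.dist_self], by simpa using hxy⟩
      · obtain ⟨c1, c2⟩ := ih hQ.symm D hD
        refine ⟨?_, c2⟩
        have t1 : G.dist x D.fst ≤ G.dist x w + G.dist w D.fst := hG.dist_triangle
        have t2 : G.dist x y ≤ G.dist x D.fst + G.dist D.fst y := hG.dist_triangle
        omega

lemma geodesic_dart_sig (hG : G.Connected) {x y : V} {P : G.Walk x y}
    (hP : P.length = G.dist x y) {D : G.Dart} (hD : D ∈ P.darts) :
    ((G.dist D.fst x : ℤ) - G.dist D.snd x = -1) ∧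
      ((G.dist D.fst y : ℤ) - G.dist D.snd y = 1) := by
  obtain ⟨c1, c2⟩ := geodesic_dart_dists hG P hP D hD
  have t2 : G.dist x y ≤ G.dist x D.snd + G.dist D.snd y := hG.dist_triangle
  have t3 : G.dist x D.snd ≤ G.dist x D.fst + G.dist D.fst D.snd := hG.dist_triangle
  have hDd : G.dist D.fst D.snd = 1 := SimpleGraph.dist_eq_one_iff_adj.mpr D.adj
  have hx : G.dist x D.snd = G.dist x D.fst + 1 := by omega
  have e1 : G.dist D.fst x = G.dist x D.fst := SimpleGraph.dist_comm
  have e2 : G.dist D.snd x = G.dist x D.snd := SimpleGraph.dist_comm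
  have e3 : G.dist D.fst y = G.dist D.snd y + 1 := c2
  omega

@[simp] lemma dart_edge_eq {D : G.Dart} : D.edge = s(D.fst, D.snd) := rfl

noncomputable def fCount (F : Set (Sym2 V)) {x y : V} (W : G.Walk x y) : ℕ :=
  (W.darts.filter fun D => decide (D.edge ∈ F)).length

lemma fCount_nil {x : V} : fCount F (SimpleGraph.Walk.nil : G.Walk x x) = 0 := rfl

lemma fCount_cons {x w y : V} (h : G.Adj x w) (Q : G.Walk w y) :
    fCount F (SimpleGraph.Walk.cons h Q) = (if s(x, w) ∈ F then 1 else 0) + fCount F Q := by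
  unfold fCount
  rw [SimpleGraph.Walk.darts_cons]
  by_cases hm : s(x, w) ∈ F
  · rw [List.filter_cons_of_pos (p := fun D : G.Dart => decide (D.edge ∈ F)) (a := ⟨(x, w), h⟩) (decide_eq_true hm), if_pos hm, List.length_cons]
    omega
  · rw [List.filter_cons_of_neg (p := fun D : G.Dart => decide (D.edge ∈ F)) (a := ⟨(x, w), h⟩)
      (fun hc => absurd ((decide_eq_false hm).symm.trans hc) Bool.false_ne_true), if_neg hm]
    omega

lemma fCount_append {x y z : V} (W1 : G.Walk x y) (W2 : G.Walk y z) :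
    fCount F (W1.append W2) = fCount F W1 + fCount F W2 := by
  unfold fCount
  rw [SimpleGraph.Walk.darts_append, List.filter_append, List.length_append]

private lemma list_map_sum_const {α : Type*} (l : List α) (f : α → ℤ) (c : ℤ)
    (h : ∀ a ∈ l, f a = c) : (l.map f).sum = l.length * c := by
  induction l with
  | nil => simp
  | cons a t ih =>
      rw [List.map_cons, List.sum_cons, h a (by simp), ih (fun b hb => h b (by simp [hb])),
        List.length_cons]
      push_cast
      ring

private lemma list_map_sum_sub {α : Type*} (l : List α) (f g : α → ℤ) :
    (l.map f).sum - (l.map g).sum = (l.map fun a => f a - g a).sum := by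
  induction l with
  | nil => simp
  | cons a t ih => simp only [List.map_cons, List.sum_cons]; omega

lemma filter_sum_sig (lam : V → ℤ)
    (hlam : ∀ ⦃c d : V⦄, G.Adj c d → s(c, d) ∉ F → lam c = lam d) :
    ∀ {x y : V} (P : G.Walk x y),
      ((P.darts.filter fun D => decide (D.edge ∈ F)).map
          fun D => lam D.fst - lam D.snd).sum = lam x - lam y := by
  intro x y P
  induction P with
  | nil => simp
  | @cons x w y h Q ih =>
      rw [SimpleGraph.Walk.darts_cons]
      by_cases hm : s(x, w) ∈ F
      · rw [List.filter_cons_of_pos (p := fun D : G.Dart => decide (D.edge ∈ F)) (a := ⟨(x, w), h⟩) (decide_eq_true hm), List.map_cons, List.sum_cons, ih]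
        show lam x - lam w + (lam w - lam y) = lam x - lam y
        ring
      · rw [List.filter_cons_of_neg (p := fun D : G.Dart => decide (D.edge ∈ F)) (a := ⟨(x, w), h⟩)
      (fun hc => absurd ((decide_eq_false hm).symm.trans hc) Bool.false_ne_true), ih, hlam h hm]

lemma GoodF.count_le (h : GoodF G F) (hG : G.Connected) {x y : V}
    (P : G.Walk x y) (hP : P.length = G.dist x y) (W : G.Walk x y) :
    fCount F P ≤ fCount F W := by
  classical
  set L := P.darts.filter fun D => decide (D.edge ∈ F) with hL
  have hLmem : ∀ D ∈ L, D ∈ P.darts ∧ D.edge ∈ F := by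
    intro D hD
    rw [hL, List.mem_filter] at hD
    exact ⟨hD.1, of_decide_eq_true hD.2⟩
  set S : V → ℤ := fun w => (L.map fun D => (G.dist D.fst w : ℤ) - G.dist D.snd w).sum with hS
  have hSx : S x = L.length * (-1) := by
    rw [hS]
    refine list_map_sum_const _ _ _ (fun D hD => ?_)
    exact (geodesic_dart_sig hG hP (hLmem D hD).1).1
  have hSy : S y = L.length * 1 := by
    rw [hS]
    refine list_map_sum_const _ _ _ (fun D hD => ?_)
    exact (geodesic_dart_sig hG hP (hLmem D hD).1).2
  have key : ∀ {c e : V} (W' : G.Walk c e), S e - S c ≤ 2 * (fCount F W' : ℤ) := by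
    intro c e W'
    induction W' with
    | nil => simp
    | @cons c d e h' Q ih =>
        have hstep : S d - S c ≤ 2 * (if s(c, d) ∈ F then 1 else 0 : ℤ) := by
          by_cases hm : s(c, d) ∈ F
          · rw [if_pos hm]
            have heq : S d - S c = ((L.map fun D =>
                ((G.dist D.fst d : ℤ) - G.dist D.fst c) - ((G.dist D.snd d : ℤ) - G.dist D.snd c))).sum := by
              rw [hS]
              dsimp only
              rw [list_map_sum_sub]
              congr 1
              refine List.map_congr_left (fun D _ => ?_)
              ring
            have hts := filter_sum_sig (F := F)
              (fun v0 => (G.dist v0 d : ℤ) - G.dist v0 c) ?hlam P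
            case hlam =>
              intro c' d' hcd' hnm
              have h2 := h.2 h' hm hcd' hnm
              have e1 : G.dist c c' = G.dist c' c := SimpleGraph.dist_comm
              have e2 : G.dist d c' = G.dist c' d := SimpleGraph.dist_comm
              have e3 : G.dist c d' = G.dist d' c := SimpleGraph.dist_comm
              have e4 : G.dist d d' = G.dist d' d := SimpleGraph.dist_comm
              omega
            rw [heq]
            have heq2 : (L.map fun D =>
                ((G.dist D.fst d : ℤ) - G.dist D.fst c) - ((G.dist D.snd d : ℤ) - G.dist D.snd c)).sum
                = ((G.dist x d : ℤ) - G.dist x c) - ((G.dist y d : ℤ) - G.dist y c) := by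
              rw [← hts]
            rw [heq2]
            have hd1 : G.dist c d = 1 := SimpleGraph.dist_eq_one_iff_adj.mpr h'
            have t1 : G.dist x d ≤ G.dist x c + G.dist c d := hG.dist_triangle
            have t2 : G.dist x c ≤ G.dist x d + G.dist d c := hG.dist_triangle
            have t3 : G.dist y d ≤ G.dist y c + G.dist c d := hG.dist_triangle
            have t4 : G.dist y c ≤ G.dist y d + G.dist d c := hG.dist_triangle
            have hd2 : G.dist d c = 1 := SimpleGraph.dist_eq_one_iff_adj.mpr h'.symm
            omega
          · rw [if_neg hm]
            have : S d = S c := by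
              rw [hS]
              dsimp only
              congr 1
              refine List.map_congr_left (fun D hD => ?_)
              have hDm := hLmem D hD
              have hDadj : G.Adj D.fst D.snd := D.adj
              have hDe : s(D.fst, D.snd) ∈ F := by
                have := hDm.2; simpa using this
              have h2 := h.2 hDadj hDe h' hm
              omega
            omega
        have := ih
        rw [fCount_cons]
        push_cast
        omega
  have hfin := key W
  have : fCount F P = L.length := rfl
  have h2 := hSx
  have h3 := hSy
  omega

lemma exists_proj_walk (h : GoodF G F) {x y : V} (W : G.Walk x y) :
    ∃ Q : (quotGraph G F).Walk (proj G F x) (proj G F y), Q.length = fCount F W := by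
  induction W with
  | nil => exact ⟨.nil, rfl⟩
  | @cons x w y h' Q ih =>
      obtain ⟨Qw, hQw⟩ := ih
      by_cases hm : s(x, w) ∈ F
      · refine ⟨.cons (show (quotGraph G F).Adj (proj G F x) (proj G F w) from
          ⟨h.proj_ne h' hm, x, w, h', rfl, rfl⟩) Qw, ?_⟩
        rw [SimpleGraph.Walk.length_cons, hQw, fCount_cons, if_pos hm]
        omega
      · have hpe : proj G F x = proj G F w :=
          SimpleGraph.ConnectedComponent.sound
            (SimpleGraph.Adj.reachable (by rw [SimpleGraph.deleteEdges_adj]; exact ⟨h', hm⟩))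
        refine ⟨Qw.copy hpe.symm rfl, ?_⟩
        rw [SimpleGraph.Walk.length_copy, hQw, fCount_cons, if_neg hm]
        omega

lemma walk_del_fCount {x y : V} (W0 : (G.deleteEdges F).Walk x y) :
    ∃ W : G.Walk x y, fCount F W = 0 := by
  induction W0 with
  | nil => exact ⟨.nil, rfl⟩
  | @cons x w y h' Q ih =>
      obtain ⟨W, hW⟩ := ih
      rw [SimpleGraph.deleteEdges_adj] at h'
      refine ⟨.cons h'.1 W, ?_⟩
      rw [fCount_cons, if_neg h'.2, hW]

lemma exists_lift_walk :
    ∀ {X Y : Comp G F} (Q : (quotGraph G F).Walk X Y) {x y : V},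
      proj G F x = X → proj G F y = Y → ∃ W : G.Walk x y, fCount F W ≤ Q.length := by
  intro X Y Q
  induction Q with
  | nil =>
      intro x y hx hy
      have hr : (G.deleteEdges F).Reachable x y :=
        SimpleGraph.ConnectedComponent.exact (hx.trans hy.symm)
      obtain ⟨W0⟩ := hr
      obtain ⟨W, hW⟩ := walk_del_fCount W0
      exact ⟨W, by simp [hW]⟩
  | @cons X Z Y hadj Q ih =>
      intro x y hx hy
      obtain ⟨hne, a, b, hab, ha, hb⟩ := id hadj
      have hr : (G.deleteEdges F).Reachable x a :=
        SimpleGraph.ConnectedComponent.exact (hx.trans ha.symm)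
      obtain ⟨W0⟩ := hr
      obtain ⟨W1, hW1⟩ := walk_del_fCount W0
      obtain ⟨W2, hW2⟩ := ih hb hy
      refine ⟨W1.append (.cons hab W2), ?_⟩
      rw [fCount_append, fCount_cons, hW1, SimpleGraph.Walk.length_cons]
      by_cases hm : s(a, b) ∈ F
      · rw [if_pos hm]; omega
      · rw [if_neg hm]; omega

lemma quot_connected_s6 (h : GoodF G F) (hG : G.Connected) : (quotGraph G F).Connected := by
  have hne : Nonempty V := hG.nonempty
  rw [SimpleGraph.connected_iff]
  refine ⟨?_, ⟨proj G F (Classical.arbitrary V)⟩⟩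
  intro X Y
  obtain ⟨x, hxr⟩ := X.exists_rep
  obtain ⟨y, hyr⟩ := Y.exists_rep
  obtain ⟨W⟩ := hG.preconnected x y
  obtain ⟨Q, -⟩ := exists_proj_walk h W
  have hx : proj G F x = X := hxr
  have hy : proj G F y = Y := hyr
  rw [hx, hy] at Q
  exact ⟨Q⟩

lemma GoodF.count_eq_dist (h : GoodF G F) (hG : G.Connected) {x y : V}
    {P : G.Walk x y} (hP : P.length = G.dist x y) :
    fCount F P = (quotGraph G F).dist (proj G F x) (proj G F y) := by
  obtain ⟨Qp, hQp⟩ := exists_proj_walk h P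
  have le1 : (quotGraph G F).dist (proj G F x) (proj G F y) ≤ fCount F P :=
    hQp ▸ SimpleGraph.dist_le Qp
  obtain ⟨Qg, hQg⟩ := (quot_connected_s6 h hG).exists_walk_length_eq_dist
    (proj G F x) (proj G F y)
  obtain ⟨W, hW⟩ := exists_lift_walk Qg rfl rfl
  have le2 := h.count_le hG P hP W
  omega

private lemma length_filter_partition {α : Type*} (p q : α → Prop) :
    ∀ (l : List α), (∀ a ∈ l, q a ↔ ¬ p a) →
      (l.filter fun a => decide (p a)).length + (l.filter fun a => decide (q a)).length
        = l.length := by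
  intro l
  induction l with
  | nil => simp
  | cons a t ih =>
      intro hpq
      have ht := ih (fun b hb => hpq b (by simp [hb]))
      have hqa := hpq a (by simp)
      by_cases hp : p a
      · rw [List.filter_cons_of_pos (by simpa using hp),
            List.filter_cons_of_neg (by simp [hqa, hp])]
        simp only [List.length_cons]
        omega
      · rw [List.filter_cons_of_neg (by simpa using hp),
            List.filter_cons_of_pos (by simp [hqa, hp])]
        simp only [List.length_cons]
        omega

lemma dist_decomp (h : GoodF G F) (hG : G.Connected) (x y : V) :
    G.dist x y = (quotGraph G F).dist (proj G F x) (proj G F y)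
      + (quotGraph G (G.edgeSet \ F)).dist (proj G (G.edgeSet \ F) x)
          (proj G (G.edgeSet \ F) y) := by
  obtain ⟨P, hP⟩ := hG.exists_walk_length_eq_dist x y
  have h1 := h.count_eq_dist hG hP
  have h2 := h.compl.count_eq_dist hG hP
  have h3 : fCount F P + fCount (G.edgeSet \ F) P = P.length := by
    unfold fCount
    have := length_filter_partition (fun D : G.Dart => D.edge ∈ F)
      (fun D : G.Dart => D.edge ∈ G.edgeSet \ F) P.darts ?side
    case side =>
      intro D hD
      have hDe : D.edge ∈ G.edgeSet := D.edge_mem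
      constructor
      · exact fun hq => hq.2
      · exact fun hp => ⟨hDe, hp⟩
    simpa using this
  omega

lemma GoodF.star (h : GoodF G F) (hG : G.Connected) {p q : V} (hpq : G.Adj p q)
    (hm : s(p, q) ∈ F) (z : V) :
    ((quotGraph G F).dist (proj G F p) (proj G F z) : ℤ)
      - (quotGraph G F).dist (proj G F q) (proj G F z)
      = (G.dist p z : ℤ) - G.dist q z := by
  have d1 := dist_decomp h hG p z
  have d2 := dist_decomp h hG q z
  have hsame : proj G (G.edgeSet \ F) p = proj G (G.edgeSet \ F) q := by
    apply SimpleGraph.ConnectedComponent.sound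
    apply SimpleGraph.Adj.reachable
    rw [SimpleGraph.deleteEdges_adj]
    exact ⟨hpq, fun hc => hc.2 hm⟩
  rw [hsame] at d1
  omega

lemma Nset_eq_preimage (h : GoodF G F) (hG : G.Connected) {u v : V} (huv : G.Adj u v)
    (hm : s(u, v) ∈ F) :
    Nset G u v = proj G F ⁻¹' Nset (quotGraph G F) (proj G F u) (proj G F v) := by
  ext x
  have hstar := h.star hG huv hm x
  simp only [Nset, Set.mem_setOf_eq, Set.mem_preimage]
  omega

lemma mem_Mset_notF (h : GoodF G F) (hG : G.Connected) {u v : V} (huv : G.Adj u v)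
    (hm : s(u, v) ∈ F) {y z : V} (hyz : G.Adj y z) (hf : s(y, z) ∉ F) :
    s(y, z) ∈ Mset G u v ↔
      proj G F y ∈ Nset (quotGraph G F) (proj G F u) (proj G F v) := by
  have hsig := h.2 huv hm hyz hf
  have hstar := h.star hG huv hm y
  simp only [Mset, Set.mem_setOf_eq, Nset]
  have he1 : eDist G u s(y, z) = min (G.dist u y) (G.dist u z) := rfl
  have he2 : eDist G v s(y, z) = min (G.dist v y) (G.dist v z) := rfl
  rw [he1, he2]
  have hedge : s(y, z) ∈ G.edgeSet := (G.mem_edgeSet).mpr hyz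
  simp only [hedge, true_and]
  omega

lemma mem_Mset_F (h : GoodF G F) (hG : G.Connected) {u v : V} (huv : G.Adj u v)
    (hm : s(u, v) ∈ F) {y z : V} (hyz : G.Adj y z) (hf : s(y, z) ∈ F) :
    s(y, z) ∈ Mset G u v ↔
      s(proj G F y, proj G F z) ∈
        Mset (quotGraph G F) (proj G F u) (proj G F v) := by
  have h1 := h.star hG huv hm y
  have h2 := h.star hG huv hm z
  have h3 := h.star hG hyz hf u
  have hq1 : (quotGraph G F).dist (proj G F y) (proj G F u)
      = (quotGraph G F).dist (proj G F u) (proj G F y) := SimpleGraph.dist_comm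
  have hq2 : (quotGraph G F).dist (proj G F z) (proj G F u)
      = (quotGraph G F).dist (proj G F u) (proj G F z) := SimpleGraph.dist_comm
  have hg1 : G.dist y u = G.dist u y := SimpleGraph.dist_comm
  have hg2 : G.dist z u = G.dist u z := SimpleGraph.dist_comm
  have hQadj : (quotGraph G F).Adj (proj G F y) (proj G F z) :=
    ⟨h.proj_ne hyz hf, y, z, hyz, rfl, rfl⟩
  have hQedge : s(proj G F y, proj G F z) ∈ (quotGraph G F).edgeSet :=
    (SimpleGraph.mem_edgeSet _).mpr hQadj
  have hedge : s(y, z) ∈ G.edgeSet := (G.mem_edgeSet).mpr hyz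
  simp only [Mset, Set.mem_setOf_eq, hedge, hQedge, true_and]
  have he1 : eDist G u s(y, z) = min (G.dist u y) (G.dist u z) := rfl
  have he2 : eDist G v s(y, z) = min (G.dist v y) (G.dist v z) := rfl
  have he3 : eDist (quotGraph G F) (proj G F u) s(proj G F y, proj G F z)
      = min ((quotGraph G F).dist (proj G F u) (proj G F y))
          ((quotGraph G F).dist (proj G F u) (proj G F z)) := rfl
  have he4 : eDist (quotGraph G F) (proj G F v) s(proj G F y, proj G F z)
      = min ((quotGraph G F).dist (proj G F v) (proj G F y))
          ((quotGraph G F).dist (proj G F v) (proj G F z)) := rfl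
  rw [he1, he2, he3, he4]
  omega

end Machinery

section Assembly

variable {V : Type*} {G : SimpleGraph V} {F : Set (Sym2 V)}

lemma IsCPartition.goodF {k : ℕ} {P : Fin k → Set (Sym2 V)} (hP : IsCPartition G P)
    (i : Fin k) : GoodF G (P i) := by
  constructor
  · intro e hePi
    rw [← hP.1]; exact Set.mem_iUnion.mpr ⟨i, hePi⟩
  · intro a b c d hab hm hcd hnm
    by_contra hne
    apply hnm
    refine hP.2.2 i s(a, b) hm s(c, d) (Relation.TransGen.single ?_)
    refine ⟨(G.mem_edgeSet).mpr hab, (G.mem_edgeSet).mpr hcd, a, b, c, d, rfl, rfl, ?_⟩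
    intro heq
    have hcb : G.dist c b = G.dist b c := SimpleGraph.dist_comm
    exact hne (by omega)

lemma mval_quot [Finite V] (h : GoodF G F) (hG : G.Connected) {u v : V}
    (huv : G.Adj u v) (hm : s(u, v) ∈ F) (sv : V → ℝ) (se : Sym2 V → ℝ) :
    mval G sv se u v =
      mval (quotGraph G F) (qsv G F sv se) (qse G F se) (proj G F u) (proj G F v) := by
  classical
  have hfinComp : Finite (Comp G F) :=
    Finite.of_surjective (G.deleteEdges F).connectedComponentMk
      (fun X => X.exists_rep)
  set U := proj G F u with hU
  set Vq := proj G F v with hVq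
  set NQ := Nset (quotGraph G F) U Vq with hNQdef
  set MQ := Mset (quotGraph G F) U Vq with hMQdef
  -- vertex part
  have hNset : Nset G u v = ⋃ X ∈ NQ, X.supp := by
    rw [Nset_eq_preimage h hG huv hm]
    ext x
    simp only [Set.mem_preimage, Set.mem_iUnion,
      SimpleGraph.ConnectedComponent.mem_supp_iff]
    constructor
    · intro hx; exact ⟨proj G F x, hx, rfl⟩
    · rintro ⟨X, hX, rfl⟩; exact hX
  have hsuppdisj : NQ.PairwiseDisjoint (fun X : Comp G F => X.supp) := by
    intro X _ Y _ hne
    rw [Function.onFun, Set.disjoint_left]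
    intro a haX haY
    rw [SimpleGraph.ConnectedComponent.mem_supp_iff] at haX haY
    exact hne (haX ▸ haY ▸ rfl)
  have hvert : vsum (Nset G u v) sv = ∑ᶠ X ∈ NQ, vsum X.supp sv := by
    rw [vsum, hNset]
    exact finsum_mem_biUnion hsuppdisj (Set.toFinite _) (fun i _ => Set.toFinite _)
  -- non-F edges
  have hMa : Mset G u v \ F = ⋃ X ∈ NQ, compEdges G F X := by
    ext f
    induction f using Sym2.ind with
    | _ y z =>
      simp only [Set.mem_diff, Set.mem_iUnion]
      constructor
      · rintro ⟨hfM, hfF⟩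
        have hyz : G.Adj y z := (G.mem_edgeSet).mp hfM.1
        refine ⟨proj G F y, (mem_Mset_notF h hG huv hm hyz hfF).mp hfM,
          ⟨by rw [SimpleGraph.edgeSet_deleteEdges]; exact ⟨hfM.1, hfF⟩, ?_⟩⟩
        intro a ha
        rw [SimpleGraph.ConnectedComponent.mem_supp_iff]
        rcases Sym2.mem_iff.mp ha with rfl | rfl
        · rfl
        · exact SimpleGraph.ConnectedComponent.sound
            (SimpleGraph.Adj.reachable
              (by rw [SimpleGraph.deleteEdges_adj]
                  exact ⟨hyz.symm, by rwa [Sym2.eq_swap]⟩))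
      · rintro ⟨X, hX, hfc⟩
        obtain ⟨hfe, hsupp⟩ := hfc
        rw [SimpleGraph.edgeSet_deleteEdges] at hfe
        have hyz : G.Adj y z := (G.mem_edgeSet).mp hfe.1
        have hy : proj G F y = X := by
          have hyX := hsupp y (by rw [Sym2.mem_iff]; left; rfl)
          rwa [SimpleGraph.ConnectedComponent.mem_supp_iff] at hyX
        exact ⟨(mem_Mset_notF h hG huv hm hyz hfe.2).mpr (by rwa [hy]), hfe.2⟩
  have hcompdisj : NQ.PairwiseDisjoint (fun X : Comp G F => compEdges G F X) := by
    intro X _ Y _ hne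
    rw [Function.onFun, Set.disjoint_left]
    intro f hfX hfY
    induction f using Sym2.ind with
    | _ y z =>
      have hyX := hfX.2 y (by rw [Sym2.mem_iff]; left; rfl)
      have hyY := hfY.2 y (by rw [Sym2.mem_iff]; left; rfl)
      rw [SimpleGraph.ConnectedComponent.mem_supp_iff] at hyX hyY
      exact hne (hyX ▸ hyY ▸ rfl)
  have hedge1 : vsum (Mset G u v \ F) se = ∑ᶠ X ∈ NQ, vsum (compEdges G F X) se := by
    rw [vsum, hMa]
    exact finsum_mem_biUnion hcompdisj (Set.toFinite _) (fun i _ => Set.toFinite _)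
  -- F edges
  have hMb : Mset G u v ∩ F = ⋃ E ∈ MQ, hatE G F E := by
    ext f
    induction f using Sym2.ind with
    | _ y z =>
      simp only [Set.mem_inter_iff, Set.mem_iUnion]
      constructor
      · rintro ⟨hfM, hfF⟩
        have hyz : G.Adj y z := (G.mem_edgeSet).mp hfM.1
        exact ⟨s(proj G F y, proj G F z), (mem_Mset_F h hG huv hm hyz hfF).mp hfM,
          hfM.1, Sym2.map_pair_eq _ _ _⟩
      · rintro ⟨E, hE, hfh⟩
        obtain ⟨hfe, hfmap⟩ := hfh
        have hyz : G.Adj y z := (G.mem_edgeSet).mp hfe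
        have hfF : s(y, z) ∈ F := by
          by_contra hc
          have hpe : proj G F y = proj G F z :=
            SimpleGraph.ConnectedComponent.sound
              (SimpleGraph.Adj.reachable
                (by rw [SimpleGraph.deleteEdges_adj]; exact ⟨hyz, hc⟩))
          have hEd : E = s(proj G F y, proj G F y) := by
            rw [← hfmap, Sym2.map_pair_eq, hpe]
          have hEedge := hE.1
          rw [hEd] at hEedge
          exact (quotGraph G F).irrefl ((SimpleGraph.mem_edgeSet _).mp hEedge)
        have hEeq : E = s(proj G F y, proj G F z) := by
          rw [← hfmap, Sym2.map_pair_eq]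
        rw [hEeq] at hE
        exact ⟨(mem_Mset_F h hG huv hm hyz hfF).mpr hE, hfF⟩
  have hhatdisj : MQ.PairwiseDisjoint (fun E : Sym2 (Comp G F) => hatE G F E) := by
    intro E1 _ E2 _ hne
    rw [Function.onFun, Set.disjoint_left]
    intro f hf1 hf2
    exact hne (hf1.2 ▸ hf2.2 ▸ rfl)
  have hedge2 : vsum (Mset G u v ∩ F) se = ∑ᶠ E ∈ MQ, vsum (hatE G F E) se := by
    rw [vsum, hMb]
    exact finsum_mem_biUnion hhatdisj (Set.toFinite _) (fun i _ => Set.toFinite _)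
  have hMsplit : vsum (Mset G u v) se
      = vsum (Mset G u v \ F) se + vsum (Mset G u v ∩ F) se := by
    rw [vsum, vsum, vsum, ← finsum_mem_union
      (Set.disjoint_left.mpr (fun f hf1 hf2 => hf1.2 hf2.2))
      (Set.toFinite _) (Set.toFinite _)]
    congr 1
    ext f
    by_cases hf : f ∈ F
    · simp [hf]
    · simp [hf]
  -- quotient side
  have hqsv : vsum NQ (qsv G F sv se)
      = (∑ᶠ X ∈ NQ, vsum (compEdges G F X) se) + ∑ᶠ X ∈ NQ, vsum X.supp sv := by
    rw [vsum]
    exact finsum_mem_add_distrib (Set.toFinite _)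
  have hqse : vsum MQ (qse G F se) = ∑ᶠ E ∈ MQ, vsum (hatE G F E) se := rfl
  rw [mval, mval, hvert, hMsplit, hedge1, hedge2, ← hNQdef, ← hMQdef, hqsv, hqse]
  ring

end Assembly


/-- For a connected strength-weighted graph, with `e = uv ∈ E_i`,
`U = ℓ_i(u)`, `V = ℓ_i(v)` and `E = UV` the corresponding edge of the strength-weighted
quotient graph `G_i = G_sw/E_i`: `m_u(e|G_sw) = m_U(E|G_i)` and `m_v(e|G_sw) = m_V(E|G_i)`. -/
theorem mval_eq_quotient {V : Type*} [Finite V] (G : SimpleGraph V) (hG : G.Connected)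
    (wv sv : V → ℝ) (we se : Sym2 V → ℝ)
    (hwv : ∀ x, 0 ≤ wv x) (hsv : ∀ x, 0 ≤ sv x)
    (hwe : ∀ e, 0 ≤ we e) (hse : ∀ e, 0 ≤ se e)
    {k : ℕ} (P : Fin k → Set (Sym2 V)) (hP : IsCPartition G P)
    (i : Fin k) (u v : V) (he : s(u, v) ∈ P i) :
    mval G sv se u v =
      mval (quotGraph G (P i)) (qsv G (P i) sv se) (qse G (P i) se)
        (proj G (P i) u) (proj G (P i) v) ∧
    mval G sv se v u =
      mval (quotGraph G (P i)) (qsv G (P i) sv se) (qse G (P i) se)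
        (proj G (P i) v) (proj G (P i) u) := by
  have hF : GoodF G (P i) := hP.goodF i
  have huv : G.Adj u v := (G.mem_edgeSet).mp (hF.1 he)
  have hvu : s(v, u) ∈ P i := by rwa [Sym2.eq_swap]
  exact ⟨mval_quot hF hG huv he sv se, mval_quot hF hG huv.symm hvu sv se⟩

end SzegedCut
end
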